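/- arXiv:1111.1226 — 2 statements merged into one kernel-verified Lean document; each statement's English description precedes it below -/
import Mathlib

section
/- Let β < 0 and μ ≥ 1, and let δ : ℝ₊ → ℝ₊ be locally integrable with lim_{t→∞} t^{-μ} ∫_0^t δ(s) ds = ν for some ν ≥ 0. Then lim_{t→∞} t^{-μ} ∫_0^t e^{2β(t-s)} δ(s) ds = 0. -/
open Real MeasureTheory Filter

/-!
Split the integral at `t - √t`. On `[0, t - √t]` the kernel is at most `e^{2β√t} → 0`, so this part
is at most `e^{2β√t} ∫_0^t δ = o(t^μ)`. On `[t - √t, t]` the kernel is at most `1`, and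
`∫_{t-√t}^t δ = ∫_0^t δ - ∫_0^{t-√t} δ = o(t^μ)`: since `(t - √t) / t → 1`, both terms are
`ν t^μ + o(t^μ)`.
-/

theorem integral_exp_mul_sub_mul_le {c h t : ℝ} {δ : ℝ → ℝ} (hc : c ≤ 0) (hh : 0 ≤ h)
    (hht : h ≤ t) (hδ : ∀ s, 0 ≤ δ s) (hint : IntervalIntegrable δ volume 0 t) :
    ∫ s in 0..t, exp (c * (t - s)) * δ s ≤
      exp (c * h) * (∫ s in 0..t, δ s) + ∫ s in t - h..t, δ s := by
  have hint_left : IntervalIntegrable δ volume 0 (t - h) :=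
    hint.mono_set (Set.uIcc_subset_uIcc_left (Set.mem_uIcc_of_le (by linarith) (by linarith)))
  have hint_right : IntervalIntegrable δ volume (t - h) t := hint_left.symm.trans hint
  have hleft : ∫ s in 0..t - h, exp (c * (t - s)) * δ s ≤ exp (c * h) * ∫ s in 0..t, δ s := by
    calc ∫ s in 0..t - h, exp (c * (t - s)) * δ s
        ≤ ∫ s in 0..t - h, exp (c * h) * δ s := by
          refine intervalIntegral.integral_mono_on (by linarith)
            (hint_left.continuousOn_mul (by fun_prop)) (hint_left.const_mul _) fun s hs => ?_
          exact mul_le_mul_of_nonneg_right (exp_le_exp.mpr (by nlinarith [hs.2])) (hδ s)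
      _ ≤ exp (c * h) * ∫ s in 0..t, δ s := by
          rw [intervalIntegral.integral_const_mul]
          gcongr
          exact intervalIntegral.integral_mono_interval le_rfl (by linarith) (by linarith)
            (Eventually.of_forall hδ) hint
  have hright : ∫ s in t - h..t, exp (c * (t - s)) * δ s ≤ ∫ s in t - h..t, δ s := by
    refine intervalIntegral.integral_mono_on (by linarith)
      (hint_right.continuousOn_mul (by fun_prop)) hint_right fun s hs => ?_
    refine mul_le_of_le_one_left (hδ s) (exp_le_one_iff.mpr ?_)
    nlinarith [hs.2]
  rw [← intervalIntegral.integral_add_adjacent_intervals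
    (hint_left.continuousOn_mul (by fun_prop)) (hint_right.continuousOn_mul (by fun_prop))]
  exact add_le_add hleft hright

theorem tendsto_comp_div_rpow_of_div_tendsto_one {f a : ℝ → ℝ} {μ ν : ℝ}
    (hf : Tendsto (fun t => f t / t ^ μ) atTop (nhds ν))
    (ha : Tendsto (fun t => a t / t) atTop (nhds 1)) :
    Tendsto (fun t => f (a t) / t ^ μ) atTop (nhds ν) := by
  have ha_top : Tendsto a atTop atTop :=
    (ha.pos_mul_atTop one_pos tendsto_id).congr' <| by
      filter_upwards [eventually_gt_atTop 0] with t ht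
      simp [div_mul_cancel₀ _ ht.ne']
  have hratio : Tendsto (fun t => (a t / t) ^ μ) atTop (nhds 1) := by
    simpa using ha.rpow_const (Or.inl one_ne_zero)
  rw [← mul_one ν]
  refine ((hf.comp ha_top).mul hratio).congr' ?_
  filter_upwards [eventually_gt_atTop 0, ha_top.eventually_gt_atTop 0] with t ht hat
  rw [Function.comp_apply, div_rpow hat.le ht.le,
    div_mul_div_cancel₀ (rpow_pos_of_pos hat μ).ne']

theorem tendsto_sub_sqrt_div_self : Tendsto (fun t : ℝ => (t - √t) / t) atTop (nhds 1) := by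
  have : Tendsto (fun t : ℝ => 1 - (√t)⁻¹) atTop (nhds (1 - 0)) :=
    tendsto_const_nhds.sub tendsto_sqrt_atTop.inv_tendsto_atTop
  rw [sub_zero] at this
  refine this.congr' ?_
  filter_upwards [eventually_gt_atTop 0] with t ht
  rw [sub_div, div_self ht.ne', sqrt_div_self]

theorem stmt7_general (β μ ν : ℝ) (δ : ℝ → ℝ)
    (hβ : β < 0)
    (hδnonneg : ∀ s, 0 ≤ δ s)
    (hδloc : ∀ t : ℝ, IntervalIntegrable δ volume 0 t)
    (havg : Tendsto (fun t : ℝ => (∫ s in (0:ℝ)..t, δ s) / t ^ μ) atTop (nhds ν)) :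
    Tendsto (fun t : ℝ => (∫ s in (0:ℝ)..t, Real.exp (2 * β * (t - s)) * δ s) / t ^ μ)
      atTop (nhds 0) := by
  set F : ℝ → ℝ := fun t => ∫ s in (0:ℝ)..t, δ s
  have hF_shift : Tendsto (fun t => F (t - √t) / t ^ μ) atTop (nhds ν) :=
    tendsto_comp_div_rpow_of_div_tendsto_one havg tendsto_sub_sqrt_div_self
  have hdecay : Tendsto (fun t => exp (2 * β * √t)) atTop (nhds 0) :=
    tendsto_exp_atBot.comp <|
      (tendsto_const_mul_atBot_of_neg (by linarith)).mpr tendsto_sqrt_atTop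
  have hbound : Tendsto (fun t => exp (2 * β * √t) * (F t / t ^ μ) +
      (F t / t ^ μ - F (t - √t) / t ^ μ)) atTop (nhds 0) := by
    simpa using (hdecay.mul havg).add (havg.sub hF_shift)
  refine tendsto_of_tendsto_of_tendsto_of_le_of_le' tendsto_const_nhds hbound ?_ ?_
  · filter_upwards [eventually_ge_atTop 0] with t ht
    exact div_nonneg (intervalIntegral.integral_nonneg ht fun s _ =>
      mul_nonneg (exp_pos _).le (hδnonneg s)) (rpow_nonneg ht μ)
  · filter_upwards [eventually_ge_atTop 1] with t ht
    rw [mul_div_assoc', ← sub_div, ← add_div,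
      intervalIntegral.integral_interval_sub_left (hδloc t) (hδloc (t - √t))]
    refine div_le_div_of_nonneg_right ?_ (rpow_nonneg (by linarith) μ)
    exact integral_exp_mul_sub_mul_le (by linarith) (sqrt_nonneg t)
      (sqrt_le_self_iff.mpr (Or.inr ht)) hδnonneg (hδloc t)

/-- If `β < 0`, `μ ≥ 1`, and `δ ≥ 0` is locally integrable with
`t^{-μ} ∫_0^t δ(s) ds → ν`, then `t^{-μ} ∫_0^t e^{2β(t-s)} δ(s) ds → 0`. -/
theorem stmt7 (β μ ν : ℝ) (δ : ℝ → ℝ)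
    (hβ : β < 0) (hμ : 1 ≤ μ) (hν : 0 ≤ ν)
    (hδmeas : Measurable δ)
    (hδnonneg : ∀ s, 0 ≤ δ s)
    (hδloc : ∀ t : ℝ, IntervalIntegrable δ volume 0 t)
    (havg : Tendsto (fun t : ℝ => (∫ s in (0:ℝ)..t, δ s) / t ^ μ) atTop (nhds ν)) :
    Tendsto (fun t : ℝ => (∫ s in (0:ℝ)..t, Real.exp (2 * β * (t - s)) * δ s) / t ^ μ)
      atTop (nhds 0) :=
  stmt7_general β μ ν δ hβ hδnonneg hδloc havg
end

section
/- (Kronecker's lemma for functions) Let Y : [0,∞) → ℝ be a càdlàg function of locally bounded variation and f : [0,∞) → (0,∞) a strictly positive increasing function with f(t) → ∞ as t → ∞. If the improper Stieltjes integral ∫_0^∞ dY(t)/f(t) exists (i.e. lim_{T→∞} ∫_0^T f(t)^{-1} dY(t) exists and is finite), then Y(t)/f(t) → 0 as t → ∞. -/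
/-!
Write `ν = ν₁ - ν₂` with `dνᵢ = dYᵢ / f`. The hypothesis says that `ν (0, T]` converges, so for
`S` large every tail `ν (u, T]` with `S ≤ u ≤ T` is at most `ε` in absolute value. By the
layer-cake formula, `Y T - Y S = ∫_(S,T] f dν = ∫_0^{f T} ν ({f ≥ s} ∩ (S, T]) ds`, and since `f`
is monotone each of these superlevel sets is an interval `(c, T]` or `[c, T]`, whose mass is a
tail or a limit of tails. Hence `|Y T - Y S| ≤ ε f T`, and `Y T / f T → 0` because `f T → ∞`.
-/

open MeasureTheory Filter Set Topology
open scoped ENNReal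

section LayerCake

variable {α : Type*} [MeasurableSpace α] {B : Set α} {f : α → ℝ} {M : ℝ}

theorem setIntegral_eq_integral_Ioc_measureReal_le {ν : Measure α} (hB : MeasurableSet B)
    (hνB : ν B ≠ ∞) (hf : AEMeasurable f (ν.restrict B)) (hf0 : ∀ x ∈ B, 0 ≤ f x)
    (hfM : ∀ x ∈ B, f x ≤ M) :
    ∫ x in B, f x ∂ν = ∫ s in Ioc 0 M, ν.real ({x | s ≤ f x} ∩ B) := by
  have : IsFiniteMeasure (ν.restrict B) := isFiniteMeasure_restrict.2 hνB
  have hB_ae : ∀ᵐ x ∂ν.restrict B, x ∈ B := ae_restrict_mem hB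
  have hfi : Integrable f (ν.restrict B) := by
    refine .of_bound hf.aestronglyMeasurable M ?_
    filter_upwards [hB_ae] with x hx
    rw [Real.norm_of_nonneg (hf0 x hx)]
    exact hfM x hx
  rw [hfi.integral_eq_integral_Ioc_meas_le (hB_ae.mono hf0) (hB_ae.mono hfM)]
  simp only [Measure.real, Measure.restrict_apply' hB]

theorem integrableOn_measureReal_superlevel (ν : Measure α) (hνB : ν B ≠ ∞) (a b : ℝ) :
    IntegrableOn (fun s => ν.real ({x | s ≤ f x} ∩ B)) (Ioc a b) := by
  have hanti : Antitone fun s => ν.real ({x | s ≤ f x} ∩ B) := fun s s' hss' =>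
    measureReal_mono (inter_subset_inter_left _ fun x hx => hss'.trans hx)
      (measure_ne_top_of_subset inter_subset_right hνB)
  refine Measure.integrableOn_of_bounded (M := ν.real B) measure_Ioc_lt_top.ne
    hanti.measurable.aestronglyMeasurable (Eventually.of_forall fun s => ?_)
  rw [Real.norm_of_nonneg measureReal_nonneg]
  exact measureReal_mono inter_subset_right hνB

theorem abs_setIntegral_sub_le_of_abs_measureReal_superlevel_sub_le {ν₁ ν₂ : Measure α}
    (hB : MeasurableSet B) (hν₁B : ν₁ B ≠ ∞) (hν₂B : ν₂ B ≠ ∞)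
    (hf₁ : AEMeasurable f (ν₁.restrict B)) (hf₂ : AEMeasurable f (ν₂.restrict B))
    (hf0 : ∀ x ∈ B, 0 ≤ f x) (hfM : ∀ x ∈ B, f x ≤ M) (hM : 0 ≤ M) {ε : ℝ}
    (hlevel : ∀ s ∈ Ioc 0 M,
      |ν₁.real ({x | s ≤ f x} ∩ B) - ν₂.real ({x | s ≤ f x} ∩ B)| ≤ ε) :
    |∫ x in B, f x ∂ν₁ - ∫ x in B, f x ∂ν₂| ≤ ε * M := by
  rw [setIntegral_eq_integral_Ioc_measureReal_le hB hν₁B hf₁ hf0 hfM,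
    setIntegral_eq_integral_Ioc_measureReal_le hB hν₂B hf₂ hf0 hfM,
    ← integral_sub (integrableOn_measureReal_superlevel ν₁ hν₁B 0 M)
      (integrableOn_measureReal_superlevel ν₂ hν₂B 0 M)]
  simpa [Real.volume_real_Ioc_of_le hM] using
    norm_setIntegral_le_of_norm_le_const (f := fun s =>
      ν₁.real ({x | s ≤ f x} ∩ B) - ν₂.real ({x | s ≤ f x} ∩ B)) (μ := volume)
      measure_Ioc_lt_top hlevel

end LayerCake

theorem exists_eq_Ioc_or_eq_Icc_of_subset_Ioc {S T : ℝ} {A : Set ℝ} (hST : S ≤ T)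
    (hA : A ⊆ Ioc S T) (hup : ∀ x ∈ A, ∀ y ∈ Ioc S T, x ≤ y → y ∈ A) :
    (∃ c ∈ Icc S T, A = Ioc c T) ∨ ∃ c ∈ Ioc S T, A = Icc c T := by
  rcases A.eq_empty_or_nonempty with rfl | hne
  · exact .inl ⟨T, ⟨hST, le_rfl⟩, (Ioc_self T).symm⟩
  have hbdd : BddBelow A := ⟨S, fun x hx => (hA hx).1.le⟩
  set c := sInf A
  have hSc : S ≤ c := le_csInf hne fun x hx => (hA hx).1.le
  have hA_Icc : A ⊆ Icc c T := fun x hx => ⟨csInf_le hbdd hx, (hA hx).2⟩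
  have hIoc_A : Ioc c T ⊆ A := fun y hy => by
    obtain ⟨x, hx, hxy⟩ := exists_lt_of_csInf_lt hne hy.1
    exact hup x hx y ⟨hSc.trans_lt hy.1, hy.2⟩ hxy.le
  by_cases hc : c ∈ A
  · refine .inr ⟨c, hA hc, hA_Icc.antisymm fun y hy => ?_⟩
    rcases hy.1.eq_or_lt with rfl | hcy
    exacts [hc, hIoc_A ⟨hcy, hy.2⟩]
  · have hcT : c ≤ T := (hA_Icc hne.some_mem).1.trans (hA_Icc hne.some_mem).2
    refine .inl ⟨c, ⟨hSc, hcT⟩, Subset.antisymm (fun x hx => ?_) hIoc_A⟩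
    exact ⟨(hA_Icc hx).1.lt_of_ne fun h => hc (h ▸ hx), (hA_Icc hx).2⟩

theorem tendsto_measureReal_Ioc_sub_nhdsGT {ν : Measure ℝ} {S c T : ℝ} (hSc : S < c)
    (hν : ν (Ioc S T) ≠ ∞) :
    Tendsto (fun δ => ν.real (Ioc (c - δ) T)) (𝓝[>] 0) (𝓝 (ν.real (Icc c T))) := by
  have hInter : ⋂ δ > (0 : ℝ), Ioc (c - δ) T = Icc c T := by
    ext t
    simp only [mem_iInter, mem_Ioc, mem_Icc]
    refine ⟨fun h => ⟨le_of_forall_pos_lt_add fun δ hδ => ?_, (h 1 one_pos).2⟩,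
      fun h δ hδ => ⟨by linarith [h.1], h.2⟩⟩
    linarith [(h δ hδ).1]
  have hmeas : Tendsto (fun δ => ν (Ioc (c - δ) T)) (𝓝[>] 0) (𝓝 (ν (Icc c T))) := by
    rw [← hInter]
    refine tendsto_measure_biInter_gt (fun _ _ => nullMeasurableSet_Ioc)
      (fun δ δ' _ hδδ' => Ioc_subset_Ioc_left (by linarith)) ⟨c - S, sub_pos.2 hSc, ?_⟩
    simpa using hν
  exact (ENNReal.tendsto_toReal (measure_ne_top_of_subset (Icc_subset_Ioc_left hSc) hν)).comp hmeas

theorem abs_measureReal_sub_le_of_subset_Ioc {ν₁ ν₂ : Measure ℝ} {S T ε : ℝ} {A : Set ℝ}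
    (hST : S ≤ T) (h₁ : ν₁ (Ioc S T) ≠ ∞) (h₂ : ν₂ (Ioc S T) ≠ ∞)
    (htail : ∀ u ∈ Icc S T, |ν₁.real (Ioc u T) - ν₂.real (Ioc u T)| ≤ ε)
    (hA : A ⊆ Ioc S T) (hup : ∀ x ∈ A, ∀ y ∈ Ioc S T, x ≤ y → y ∈ A) :
    |ν₁.real A - ν₂.real A| ≤ ε := by
  rcases exists_eq_Ioc_or_eq_Icc_of_subset_Ioc hST hA hup with ⟨c, hc, rfl⟩ | ⟨c, hc, rfl⟩
  · exact htail c hc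
  · refine le_of_tendsto ((tendsto_measureReal_Ioc_sub_nhdsGT hc.1 h₁).sub
      (tendsto_measureReal_Ioc_sub_nhdsGT hc.1 h₂)).abs ?_
    filter_upwards [Ioo_mem_nhdsGT (sub_pos.2 hc.1)] with δ hδ
    exact htail _ ⟨by linarith [hδ.2], by linarith [hδ.1, hc.2]⟩

theorem abs_setIntegral_Ioc_sub_le_mul {ν₁ ν₂ : Measure ℝ} {f : ℝ → ℝ} {S T ε : ℝ}
    (hST : S ≤ T) (h₁ : ν₁ (Ioc S T) ≠ ∞) (h₂ : ν₂ (Ioc S T) ≠ ∞)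
    (hf : MonotoneOn f (Icc S T)) (hfS : 0 ≤ f S)
    (htail : ∀ u ∈ Icc S T, |ν₁.real (Ioc u T) - ν₂.real (Ioc u T)| ≤ ε) :
    |∫ t in Ioc S T, f t ∂ν₁ - ∫ t in Ioc S T, f t ∂ν₂| ≤ ε * f T := by
  have hf' : MonotoneOn f (Ioc S T) := hf.mono Ioc_subset_Icc_self
  have hTmem : T ∈ Icc S T := ⟨hST, le_rfl⟩
  have hfST : ∀ t ∈ Ioc S T, f S ≤ f t ∧ f t ≤ f T := fun t ht =>
    ⟨hf ⟨le_rfl, hST⟩ (Ioc_subset_Icc_self ht) ht.1.le, hf (Ioc_subset_Icc_self ht) hTmem ht.2⟩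
  refine abs_setIntegral_sub_le_of_abs_measureReal_superlevel_sub_le measurableSet_Ioc h₁ h₂
    (aemeasurable_restrict_of_monotoneOn measurableSet_Ioc hf')
    (aemeasurable_restrict_of_monotoneOn measurableSet_Ioc hf')
    (fun t ht => hfS.trans (hfST t ht).1) (fun t ht => (hfST t ht).2)
    (hfS.trans (hf ⟨le_rfl, hST⟩ hTmem hST)) fun s _ => ?_
  exact abs_measureReal_sub_le_of_subset_Ioc hST h₁ h₂ htail inter_subset_right
    fun x hx y hy hxy => ⟨hx.1.trans (hf' hx.2 hy hxy), hy⟩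

theorem tendsto_div_of_forall_abs_le_add_mul {ι : Type*} {l : Filter ι} {a b : ι → ℝ}
    (hb : Tendsto b l atTop) (h : ∀ ε > 0, ∃ C, ∀ᶠ x in l, |a x| ≤ C + ε * b x) :
    Tendsto (fun x => a x / b x) l (𝓝 0) := by
  refine (Asymptotics.IsLittleO.of_bound fun c hc => ?_).tendsto_div_nhds_zero
  obtain ⟨C, hC⟩ := h (c / 2) (half_pos hc)
  filter_upwards [hC, (hb.const_mul_atTop (half_pos hc)).eventually_ge_atTop C,
    hb.eventually_ge_atTop 0] with x hx hCx hbx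
  rw [Real.norm_eq_abs, Real.norm_of_nonneg hbx]
  linarith

theorem MonotoneOn.integrableOn_Ioc {ν : Measure ℝ} {f : ℝ → ℝ} {a b : ℝ}
    (hf : MonotoneOn f (Icc a b)) (hν : ν (Ioc a b) ≠ ∞) : IntegrableOn f (Ioc a b) ν := by
  refine .of_bound hν.lt_top (aemeasurable_restrict_of_monotoneOn measurableSet_Ioc
    (hf.mono Ioc_subset_Icc_self)).aestronglyMeasurable (max |f a| |f b|)
    (ae_restrict_of_forall_mem measurableSet_Ioc fun t ht => ?_)
  have hab : a ≤ b := ht.1.le.trans ht.2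
  exact abs_le_max_abs_abs (hf ⟨le_rfl, hab⟩ (Ioc_subset_Icc_self ht) ht.1.le)
    (hf (Ioc_subset_Icc_self ht) ⟨hab, le_rfl⟩ ht.2)

theorem measureReal_Ioc_add_measureReal_Ioc {ν : Measure ℝ} {a b c : ℝ} (hab : a ≤ b)
    (hbc : b ≤ c) (hν : ν (Ioc a c) ≠ ∞) :
    ν.real (Ioc a b) + ν.real (Ioc b c) = ν.real (Ioc a c) := by
  rw [← Ioc_union_Ioc_eq_Ioc hab hbc] at hν ⊢
  exact (measureReal_union (Ioc_disjoint_Ioc_of_le le_rfl) measurableSet_Ioc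
    (measure_ne_top_of_subset subset_union_left hν)
    (measure_ne_top_of_subset subset_union_right hν)).symm

theorem setIntegral_Ioc_add_setIntegral_Ioc {ν : Measure ℝ} {f : ℝ → ℝ} {a b c : ℝ}
    (hab : a ≤ b) (hbc : b ≤ c) (hf : IntegrableOn f (Ioc a c) ν) :
    ∫ t in Ioc a b, f t ∂ν + ∫ t in Ioc b c, f t ∂ν = ∫ t in Ioc a c, f t ∂ν := by
  rw [← Ioc_union_Ioc_eq_Ioc hab hbc] at hf ⊢
  exact (setIntegral_union (Ioc_disjoint_Ioc_of_le le_rfl) measurableSet_Ioc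
    (hf.mono_set subset_union_left) (hf.mono_set subset_union_right)).symm

theorem tendsto_setIntegral_Ioc_sub_div_atTop {ν₁ ν₂ : Measure ℝ} {f : ℝ → ℝ} {a I : ℝ}
    (h₁ : ∀ T, ν₁ (Ioc a T) ≠ ∞) (h₂ : ∀ T, ν₂ (Ioc a T) ≠ ∞)
    (hf_mono : MonotoneOn f (Ici a)) (hf_top : Tendsto f atTop atTop)
    (hconv : Tendsto (fun T => ν₁.real (Ioc a T) - ν₂.real (Ioc a T)) atTop (𝓝 I)) :
    Tendsto (fun T => (∫ t in Ioc a T, f t ∂ν₁ - ∫ t in Ioc a T, f t ∂ν₂) / f T) atTop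
      (𝓝 0) := by
  refine tendsto_div_of_forall_abs_le_add_mul hf_top fun ε hε => ?_
  obtain ⟨S, hS⟩ := eventually_atTop.1
    (((hconv.eventually (Metric.closedBall_mem_nhds I (half_pos hε))).and
      (eventually_ge_atTop a)).and (hf_top.eventually_ge_atTop 0))
  obtain ⟨⟨-, haS⟩, hfS⟩ := hS S le_rfl
  have htail : ∀ T, ∀ u ∈ Icc S T, |ν₁.real (Ioc u T) - ν₂.real (Ioc u T)| ≤ ε := by
    intro T u hu
    have hu_conv := Metric.mem_closedBall.1 (hS u hu.1).1.1
    have hT_conv := Metric.mem_closedBall.1 (hS T (hu.1.trans hu.2)).1.1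
    rw [Real.dist_eq] at hu_conv hT_conv
    have hau : a ≤ u := haS.trans hu.1
    rw [← measureReal_Ioc_add_measureReal_Ioc hau hu.2 (h₁ T),
      ← measureReal_Ioc_add_measureReal_Ioc hau hu.2 (h₂ T)] at hT_conv
    calc |ν₁.real (Ioc u T) - ν₂.real (Ioc u T)|
        = |(ν₁.real (Ioc a u) + ν₁.real (Ioc u T) - (ν₂.real (Ioc a u) + ν₂.real (Ioc u T)) - I)
            - (ν₁.real (Ioc a u) - ν₂.real (Ioc a u) - I)| := by congr 1; ring
      _ ≤ ε / 2 + ε / 2 := (abs_sub _ _).trans (add_le_add hT_conv hu_conv)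
      _ = ε := add_halves ε
  refine ⟨|∫ t in Ioc a S, f t ∂ν₁ - ∫ t in Ioc a S, f t ∂ν₂|, ?_⟩
  filter_upwards [eventually_ge_atTop S] with T hST
  have hint : ∀ ν : Measure ℝ, (∀ T, ν (Ioc a T) ≠ ∞) → IntegrableOn f (Ioc a T) ν :=
    fun ν hν => (hf_mono.mono Icc_subset_Ici_self).integrableOn_Ioc (hν T)
  have hfin : ∀ ν : Measure ℝ, (∀ T, ν (Ioc a T) ≠ ∞) → ν (Ioc S T) ≠ ∞ :=
    fun ν hν => measure_ne_top_of_subset (Ioc_subset_Ioc_left haS) (hν T)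
  rw [← setIntegral_Ioc_add_setIntegral_Ioc haS hST (hint ν₁ h₁),
    ← setIntegral_Ioc_add_setIntegral_Ioc haS hST (hint ν₂ h₂), add_sub_add_comm]
  exact (abs_add_le _ _).trans (add_le_add_right (abs_setIntegral_Ioc_sub_le_mul hST
    (hfin ν₁ h₁) (hfin ν₂ h₂) (hf_mono.mono (Icc_subset_Ici_self.trans (Ici_subset_Ici.2 haS)))
    hfS (htail T)) _)

theorem integrableOn_inv_Ioc_of_monotoneOn {μ : Measure ℝ} [IsFiniteMeasureOnCompacts μ]
    {f : ℝ → ℝ} {a : ℝ} (hf_pos : ∀ t ∈ Ici a, 0 < f t) (hf_mono : MonotoneOn f (Ici a))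
    (b : ℝ) : IntegrableOn (fun t => (f t)⁻¹) (Ioc a b) μ := by
  have hanti : AntitoneOn (fun t => (f t)⁻¹) (Icc a b) := fun x hx y hy hxy =>
    inv_anti₀ (hf_pos x hx.1) (hf_mono hx.1 hy.1 hxy)
  exact (hanti.integrableOn_isCompact isCompact_Icc).mono_set Ioc_subset_Icc_self

section WithDensity

variable {α : Type*} [MeasurableSpace α] {μ : Measure α} {g : α → ℝ} {s : Set α}

theorem withDensity_ofReal_apply_ne_top (hs : MeasurableSet s) (hg : IntegrableOn g s μ) :
    μ.withDensity (fun x => ENNReal.ofReal (g x)) s ≠ ∞ := by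
  rw [withDensity_apply _ hs]
  exact hg.lintegral_lt_top.ne

theorem measureReal_withDensity_ofReal (hs : MeasurableSet s) (hg : IntegrableOn g s μ)
    (hg0 : ∀ x ∈ s, 0 ≤ g x) :
    (μ.withDensity fun x => ENNReal.ofReal (g x)).real s = ∫ x in s, g x ∂μ := by
  rw [measureReal_def, withDensity_apply _ hs,
    integral_eq_lintegral_of_nonneg_ae (ae_restrict_of_forall_mem hs hg0) hg.aestronglyMeasurable]

theorem setIntegral_withDensity_ofReal_inv (hs : MeasurableSet s)
    (hg : AEMeasurable (fun x => (g x)⁻¹) (μ.restrict s)) (hg0 : ∀ x ∈ s, 0 < g x) :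
    ∫ x in s, g x ∂μ.withDensity (fun x => ENNReal.ofReal (g x)⁻¹) = μ.real s := by
  rw [setIntegral_withDensity_eq_setIntegral_toReal_smul₀ hg.ennreal_ofReal
    (Eventually.of_forall fun _ => ENNReal.ofReal_lt_top) _ hs,
    setIntegral_congr_fun hs (g := fun _ => 1) fun x hx => ?_, setIntegral_const, smul_eq_mul,
    mul_one]
  simp [ENNReal.toReal_ofReal (inv_nonneg.2 (hg0 x hx).le), (hg0 x hx).ne']

end WithDensity

theorem stmt9_general (Y₁ Y₂ : StieltjesFunction ℝ) (f : ℝ → ℝ) (I : ℝ)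
    (hf_pos : ∀ t : ℝ, 0 ≤ t → 0 < f t)
    (hf_mono : MonotoneOn f (Set.Ici (0:ℝ)))
    (hf_top : Tendsto f atTop atTop)
    (hconv : Tendsto (fun T : ℝ =>
        (∫ t in Set.Ioc (0:ℝ) T, (f t)⁻¹ ∂Y₁.measure) -
        (∫ t in Set.Ioc (0:ℝ) T, (f t)⁻¹ ∂Y₂.measure)) atTop (nhds I)) :
    Tendsto (fun t : ℝ => (Y₁ t - Y₂ t) / f t) atTop (nhds 0) := by
  let ν : StieltjesFunction ℝ → Measure ℝ := fun Y =>
    Y.measure.withDensity fun t => ENNReal.ofReal (f t)⁻¹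
  have hinv (Y : StieltjesFunction ℝ) (T : ℝ) :
      IntegrableOn (fun t => (f t)⁻¹) (Ioc 0 T) Y.measure :=
    integrableOn_inv_Ioc_of_monotoneOn hf_pos hf_mono T
  have hν_fin (Y : StieltjesFunction ℝ) (T : ℝ) : ν Y (Ioc 0 T) ≠ ∞ :=
    withDensity_ofReal_apply_ne_top measurableSet_Ioc (hinv Y T)
  have hν_real (Y : StieltjesFunction ℝ) (T : ℝ) :
      (ν Y).real (Ioc 0 T) = ∫ t in Ioc 0 T, (f t)⁻¹ ∂Y.measure :=
    measureReal_withDensity_ofReal measurableSet_Ioc (hinv Y T)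
      fun t ht => (inv_pos.2 (hf_pos t ht.1.le)).le
  have hν_int (Y : StieltjesFunction ℝ) {T : ℝ} (hT : 0 ≤ T) :
      ∫ t in Ioc 0 T, f t ∂ν Y = Y T - Y 0 := by
    rw [setIntegral_withDensity_ofReal_inv measurableSet_Ioc
      (hinv Y T).aestronglyMeasurable.aemeasurable fun t ht => hf_pos t ht.1.le,
      measureReal_def, Y.measure_Ioc, ENNReal.toReal_ofReal (sub_nonneg.2 (Y.mono hT))]
  have hK := tendsto_setIntegral_Ioc_sub_div_atTop (hν_fin Y₁) (hν_fin Y₂) hf_mono hf_top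
    (by simpa only [hν_real] using hconv)
  have hconst : Tendsto (fun T => (Y₁ 0 - Y₂ 0) / f T) atTop (𝓝 0) :=
    tendsto_const_nhds.div_atTop hf_top
  refine (zero_add (0 : ℝ) ▸ hK.add hconst).congr' ?_
  filter_upwards [eventually_ge_atTop 0] with T hT
  rw [hν_int Y₁ hT, hν_int Y₂ hT]
  ring

/-- Kronecker's lemma for functions: let `Y = Y₁ - Y₂` be a càdlàg function of
locally bounded variation on `[0,∞)` (written as a difference of two Stieltjes
functions, i.e. monotone right-continuous functions), and let `f` be a strictly
positive increasing function on `[0,∞)` with `f(t) → ∞`.  If the improper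
Stieltjes integral `∫_0^∞ f(t)⁻¹ dY(t)` exists, i.e.
`∫_{(0,T]} f⁻¹ dY₁ - ∫_{(0,T]} f⁻¹ dY₂` converges to a finite limit as `T → ∞`,
then `Y(t)/f(t) → 0` as `t → ∞`. -/
theorem stmt9 (Y₁ Y₂ : StieltjesFunction ℝ) (f : ℝ → ℝ) (I : ℝ)
    (hf_pos : ∀ t : ℝ, 0 ≤ t → 0 < f t)
    (hf_mono : MonotoneOn f (Set.Ici (0:ℝ)))
    (hf_top : Tendsto f atTop atTop)
    (hint : ∀ T : ℝ, 0 < T →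
      IntegrableOn (fun t => (f t)⁻¹) (Set.Ioc 0 T) Y₁.measure ∧
      IntegrableOn (fun t => (f t)⁻¹) (Set.Ioc 0 T) Y₂.measure)
    (hconv : Tendsto (fun T : ℝ =>
        (∫ t in Set.Ioc (0:ℝ) T, (f t)⁻¹ ∂Y₁.measure) -
        (∫ t in Set.Ioc (0:ℝ) T, (f t)⁻¹ ∂Y₂.measure)) atTop (nhds I)) :
    Tendsto (fun t : ℝ => (Y₁ t - Y₂ t) / f t) atTop (nhds 0) :=
  stmt9_general Y₁ Y₂ f I hf_pos hf_mono hf_top hconv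
end
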